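/- For fixed σ > 0 and λ > 0, the unique solution p(λ; t, σ) of the stationarity equation is strictly increasing in the flow t: if 0 < t₁ < t₂ then p(λ; t₁, σ) < p(λ; t₂, σ). -/
import Mathlib


open BigOperators

/-- `p` solves the stationarity equation
`(t/(2σ)) · ((1/2)·ln(1 + p/σ) − t)^{−2} · (1 + p/σ)^{−1} = λ` on the domain
`p > σ(e^{2t} − 1)`; this characterizes the unique solution `p(λ; t, σ)`. -/
def IsStatSol (t σ lam p : ℝ) : Prop :=
  σ * (Real.exp (2 * t) - 1) < p ∧
    t / (2 * σ) / ((1 / 2) * Real.log (1 + p / σ) - t) ^ 2 / (1 + p / σ) = lam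

lemma statSol_aux (t σ lam p : ℝ) (hσ : 0 < σ) (ht : 0 < t)
    (h : IsStatSol t σ lam p) :
    Real.exp (2 * t) < 1 + p / σ ∧ 0 < (1 / 2) * Real.log (1 + p / σ) - t ∧
      t = lam * (2 * σ) * ((1 / 2) * Real.log (1 + p / σ) - t) ^ 2 * (1 + p / σ) := by
  obtain ⟨hd, he⟩ := h
  have hx : Real.exp (2 * t) < 1 + p / σ := by
    have : Real.exp (2 * t) - 1 < p / σ := by
      rw [lt_div_iff₀ hσ]; rw [mul_comm] at hd; exact hd
    linarith
  have hxpos : 0 < 1 + p / σ := lt_trans (Real.exp_pos _) hx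
  have hlog : 2 * t < Real.log (1 + p / σ) :=
    (Real.lt_log_iff_exp_lt hxpos).mpr hx
  have hu : 0 < (1 / 2) * Real.log (1 + p / σ) - t := by linarith
  refine ⟨hx, hu, ?_⟩
  set x := 1 + p / σ with hxdef
  set u := (1 / 2) * Real.log x - t with hudef
  have hune : u ≠ 0 := ne_of_gt hu
  have hxne : x ≠ 0 := ne_of_gt hxpos
  have h2σ : (2 : ℝ) * σ ≠ 0 := by positivity
  field_simp at he
  nlinarith [he]

/-- For fixed `σ > 0` and `λ > 0`, the unique solution `p(λ; t, σ)` of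
the stationarity equation is strictly increasing in the flow `t`:
if `0 < t₁ < t₂` then `p(λ; t₁, σ) < p(λ; t₂, σ)`. -/
theorem statSol_strictMono_in_flow (σ lam t₁ t₂ p₁ p₂ : ℝ)
    (hσ : 0 < σ) (hlam : 0 < lam) (ht₁ : 0 < t₁) (ht : t₁ < t₂)
    (h₁ : IsStatSol t₁ σ lam p₁) (h₂ : IsStatSol t₂ σ lam p₂) :
    p₁ < p₂ := by
  obtain ⟨hx₁, hu₁, he₁⟩ := statSol_aux t₁ σ lam p₁ hσ ht₁ h₁
  obtain ⟨hx₂, hu₂, he₂⟩ := statSol_aux t₂ σ lam p₂ hσ (lt_trans ht₁ ht) h₂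
  by_contra hcon
  push_neg at hcon
  have hx : 1 + p₂ / σ ≤ 1 + p₁ / σ := by gcongr
  have hxpos₂ : (0:ℝ) < 1 + p₂ / σ := lt_trans (Real.exp_pos _) hx₂
  have hlog : Real.log (1 + p₂ / σ) ≤ Real.log (1 + p₁ / σ) :=
    Real.log_le_log hxpos₂ hx
  set u₁ := (1 / 2) * Real.log (1 + p₁ / σ) - t₁ with hu₁def
  set u₂ := (1 / 2) * Real.log (1 + p₂ / σ) - t₂ with hu₂def
  have huu : u₂ < u₁ := by simp only [hu₁def, hu₂def]; linarith
  have hsq : u₂ ^ 2 < u₁ ^ 2 := by nlinarith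
  have hc : 0 < lam * (2 * σ) := by positivity
  have key : u₂ ^ 2 * (1 + p₂ / σ) < u₁ ^ 2 * (1 + p₁ / σ) := by
    calc u₂ ^ 2 * (1 + p₂ / σ) < u₁ ^ 2 * (1 + p₂ / σ) :=
          mul_lt_mul_of_pos_right hsq hxpos₂
      _ ≤ u₁ ^ 2 * (1 + p₁ / σ) := mul_le_mul_of_nonneg_left hx (sq_nonneg u₁)
  have : t₂ < t₁ := by
    rw [he₁, he₂]
    nlinarith [mul_lt_mul_of_pos_left key hc]
  linarith
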